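/- Let X, Z ⊆ 𝒫({0,1,…,m−1}) be nonempty families of subsets with Xᵢ ∩ Z_j ≠ ∅ for all i, j. Let Sˣ be the family of complements of members of X, let ↓Sˣ ⊆ {0,1}^m be the decreasing set generated by the indicator vectors of Sˣ, let ↑Z be the increasing set generated by the indicator vectors of members of Z, and let K = {0,1}^m \ (↓Sˣ ∪ ↑Z). If K ≠ ∅, then the CSS code CSS(X,Z) (with Hˣ = M(X), Hᶻ = M(Z) built from component matrices [1 1]) has distances d_x = 2^{min{m−|v| : v ∈ K}} and d_z = 2^{min{|v| : v ∈ K}}, where |v| is the Hamming weight of v. -/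

import Mathlib

open Matrix

noncomputable section
open scoped Classical

/-- The vertical stack `M(X)` of the Kronecker products `⊗ₖ ([1 1] if k ∈ Xᵢ else I₂)`,
with rows of the `i`-th block indexed by tuples and columns indexed by `{0,1}^m`. -/
def MXstack {m u : ℕ} (X : Fin u → Finset (Fin m)) :
    Matrix ((i : Fin u) × ((k : Fin m) → Fin (if k ∈ X i then 1 else 2)))
      (Fin m → Fin 2) (ZMod 2) :=
  Matrix.of fun p c =>
    ∏ k, (if k ∈ X p.1 then (1 : ZMod 2)
          else if ((p.2 k : ℕ) = (c k : ℕ)) then 1 else 0)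

/-- Hamming weight of an index tuple `v ∈ {0,1}^m`. -/
def wtv {m : ℕ} (v : Fin m → Fin 2) : ℕ :=
  (Finset.univ.filter fun i : Fin m => v i = 1).card

/-- Hamming weight of a codeword. -/
def wtc {m : ℕ} (w : (Fin m → Fin 2) → ZMod 2) : ℕ :=
  (Finset.univ.filter fun x : Fin m → Fin 2 => w x ≠ 0).card

/-- Indicator vector in `{0,1}^m` of a subset of `[m]`. -/
def indFin {m : ℕ} (s : Finset (Fin m)) : Fin m → Fin 2 :=
  fun k => if k ∈ s then 1 else 0

/-!
A function `w : {0,1}^m → 𝔽₂` is the sum `∑_T ŵ(T) x^T` of Boolean monomials `x^T = [T ≤ ·]`,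
with coefficients `ŵ = ζ w` given by the zeta transform of the cube, which over `𝔽₂` is an
involution. Each row of `M(X)` is the indicator of a subcube whose free coordinates are some `Xᵢ`;
its coefficients live on `{T ≤ Xᵢᶜ}`, and conversely every `x^T` with `T ≤ Xᵢᶜ` is a sum of such
rows. So the row space of `M(X)` is spanned by the `x^T` with `T ∈ ↓Sˣ`, and dually `w ∈ Ker M(Z)`
iff `ŵ` vanishes on `↑Z`. A logical operator `w` therefore has a coefficient `ŵ(T₀) ≠ 0` with
`T₀ ∉ ↓Sˣ`; a maximal `T ≥ T₀` with `ŵ(T) ≠ 0` lies in `K`, and the Reed–Muller argument gives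
`wt w ≥ 2^(m - |T|)`, with equality for `w = x^T`. Complementing all coordinates swaps `X` and `Z`
and turns `m - |v|` into `|v|`, which gives `d_z`.
-/

namespace SubsetCode

variable {m : ℕ}

theorem fin_two_add_one_ne (a : Fin 2) : a + 1 ≠ a := by
  decide +revert

theorem fin_two_lt_iff {a b : Fin 2} : a < b ↔ a = 0 ∧ b = 1 := by
  decide +revert

theorem fin_two_ne_zero_iff {a : Fin 2} : a ≠ 0 ↔ a = 1 := by
  decide +revert

theorem fin_two_ne_one_iff {a : Fin 2} : a ≠ 1 ↔ a = 0 := by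
  decide +revert

theorem fin_two_le_one (a : Fin 2) : a ≤ 1 := by
  decide +revert

theorem fin_two_one_le_iff {a : Fin 2} : 1 ≤ a ↔ a = 1 := by
  decide +revert

def toggle (k : Fin m) (c : Fin m → Fin 2) : Fin m → Fin 2 :=
  Function.update c k (c k + 1)

theorem toggle_toggle (k : Fin m) (c : Fin m → Fin 2) : toggle k (toggle k c) = c := by
  ext k'
  rcases eq_or_ne k' k with rfl | hk'
  · simp [toggle, add_assoc, show (1 + 1 : Fin 2) = 0 from rfl]
  · simp [toggle, hk']

theorem toggle_ne (k : Fin m) (c : Fin m → Fin 2) : toggle k c ≠ c :=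
  fun h => fin_two_add_one_ne (c k) (by simpa [toggle] using congrFun h k)

/-- The terms cancel in pairs `c, toggle k c`. -/
theorem sum_eq_zero_of_toggle_invariant {R : Type*} [Ring R] [CharP R 2]
    {f : (Fin m → Fin 2) → R} (k : Fin m) (hf : ∀ c, f (toggle k c) = f c) : ∑ c, f c = 0 :=
  Finset.sum_involution (fun c _ => toggle k c)
    (fun c _ => by rw [hf]; exact CharTwo.add_self_eq_zero _)
    (fun c _ _ => toggle_ne k c) (fun _ _ => Finset.mem_univ _) (fun c _ => toggle_toggle k c)

theorem toggle_le_iff {k : Fin m} {c T : Fin m → Fin 2} (hT : T k = 1) :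
    toggle k c ≤ T ↔ c ≤ T := by
  simp only [Pi.le_def]
  refine forall_congr' fun k' => ?_
  rcases eq_or_ne k' k with rfl | hk'
  · simp [hT, fin_two_le_one]
  · simp [toggle, hk']

theorem le_toggle_iff {k : Fin m} {c T : Fin m → Fin 2} (hT : T k = 0) :
    T ≤ toggle k c ↔ T ≤ c := by
  simp only [Pi.le_def]
  refine forall_congr' fun k' => ?_
  rcases eq_or_ne k' k with rfl | hk'
  · simp [hT]
  · simp [toggle, hk']

theorem exists_eq_zero_and_eq_one_of_lt {c S : Fin m → Fin 2} (h : c < S) :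
    ∃ k, c k = 0 ∧ S k = 1 :=
  let ⟨k, hk⟩ := (Pi.lt_def.mp h).2
  ⟨k, fin_two_lt_iff.mp hk⟩

def zeta : Matrix (Fin m → Fin 2) (Fin m → Fin 2) (ZMod 2) :=
  Matrix.of fun T c => if c ≤ T then 1 else 0

/-- Over `𝔽₂` the zeta matrix is its own Möbius inverse: `[c ≤ · ≤ S]` has odd size iff `c = S`. -/
theorem zeta_mul_zeta : zeta (m := m) * zeta = 1 := by
  ext S c
  simp only [zeta, mul_apply, of_apply, one_apply, mul_ite, mul_one, mul_zero]
  by_cases hcS : c = S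
  · subst hcS
    rw [Finset.sum_eq_single c (fun T _ hT => by
      split_ifs with h₁ h₂ <;> first | rfl | exact absurd (le_antisymm h₂ h₁) hT) (by simp)]
    simp
  rw [if_neg (Ne.symm hcS)]
  by_cases hle : c ≤ S
  · obtain ⟨k, hc, hS⟩ := exists_eq_zero_and_eq_one_of_lt (lt_of_le_of_ne hle hcS)
    refine sum_eq_zero_of_toggle_invariant k fun T => ?_
    simp only [le_toggle_iff hc, toggle_le_iff hS]
  · exact Finset.sum_eq_zero fun T _ => by
      split_ifs with h₁ h₂ <;> first | rfl | exact absurd (h₁.trans h₂) hle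

theorem zeta_mulVec_zeta_mulVec (w : (Fin m → Fin 2) → ZMod 2) : zeta *ᵥ (zeta *ᵥ w) = w := by
  rw [mulVec_mulVec, zeta_mul_zeta, one_mulVec]

/-- The Boolean monomial `x^T = ∏_{T k = 1} x_k`. -/
def monomial (T : Fin m → Fin 2) : (Fin m → Fin 2) → ZMod 2 :=
  fun c => if T ≤ c then 1 else 0

theorem zeta_mulVec_monomial (T : Fin m → Fin 2) : zeta *ᵥ monomial T = Pi.single T 1 := by
  have : monomial T = zeta *ᵥ Pi.single T 1 := by
    rw [mulVec_single_one]; rfl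
  rw [this, zeta_mulVec_zeta_mulVec]

theorem sum_zeta_mulVec_smul_monomial (w : (Fin m → Fin 2) → ZMod 2) :
    ∑ T, (zeta *ᵥ w) T • monomial T = w := by
  conv_rhs => rw [← zeta_mulVec_zeta_mulVec w]
  ext c
  simp only [Finset.sum_apply, Pi.smul_apply, smul_eq_mul, mulVec, dotProduct, monomial, zeta,
    of_apply, mul_comm]

theorem dotProduct_eq_sum_zeta_mulVec (v w : (Fin m → Fin 2) → ZMod 2) :
    v ⬝ᵥ w = ∑ S, (zeta *ᵥ w) S * (v ⬝ᵥ monomial S) := by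
  conv_lhs => rw [← sum_zeta_mulVec_smul_monomial w]
  simp only [dotProduct_sum, dotProduct_smul, smul_eq_mul]

def ones (T : Fin m → Fin 2) : Finset (Fin m) := Finset.univ.filter fun k => T k = 1

theorem card_ones (T : Fin m → Fin 2) : (ones T).card = wtv T := rfl

theorem indFin_ones (T : Fin m → Fin 2) : indFin (ones T) = T := by
  funext k
  simp only [indFin, ones, Finset.mem_filter, Finset.mem_univ, true_and]
  split_ifs with h
  exacts [h.symm, (fin_two_ne_one_iff.mp h).symm]

theorem indFin_le_iff {Y : Finset (Fin m)} {T : Fin m → Fin 2} :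
    indFin Y ≤ T ↔ ∀ k ∈ Y, T k = 1 := by
  simp only [Pi.le_def, indFin]
  refine forall_congr' fun k => ?_
  by_cases hk : k ∈ Y <;> simp [hk, fin_two_one_le_iff]

theorem le_indFin_compl_iff {Y : Finset (Fin m)} {T : Fin m → Fin 2} :
    T ≤ indFin Yᶜ ↔ ∀ k ∈ Y, T k = 0 := by
  simp only [Pi.le_def, indFin, Finset.mem_compl]
  refine forall_congr' fun k => ?_
  by_cases hk : k ∈ Y <;> simp [hk, fin_two_le_one]

theorem le_iff_forall_mem_ones {T c : Fin m → Fin 2} : T ≤ c ↔ ∀ k ∈ ones T, c k = 1 := by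
  conv_lhs => rw [← indFin_ones T]
  exact indFin_le_iff

/-- Rows of the block of `M(X)` belonging to `Xᵢ = Y` are indexed by points of `{0,1}^{[m] ∖ Y}`,
encoded with a trivial coordinate `Fin 1` at each `k ∈ Y`. -/
abbrev RowIndex (Y : Finset (Fin m)) : Type := ∀ k, Fin (if k ∈ Y then 1 else 2)

theorem RowIndex.apply_eq_of_mem {Y : Finset (Fin m)} {k : Fin m} (hk : k ∈ Y) (a b : RowIndex Y) :
    a k = b k := by
  have ha := (a k).isLt
  have hb := (b k).isLt
  simp only [hk, if_true] at ha hb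
  exact Fin.ext (by omega)

def rowIndex (Y : Finset (Fin m)) (c : Fin m → Fin 2) : RowIndex Y :=
  fun k => ⟨if k ∈ Y then 0 else c k, by split_ifs; exacts [Nat.one_pos, (c k).isLt]⟩

theorem rowIndex_eq_rowIndex_iff {Y : Finset (Fin m)} {c c' : Fin m → Fin 2} :
    rowIndex Y c = rowIndex Y c' ↔ ∀ k ∉ Y, c k = c' k := by
  simp only [funext_iff, rowIndex, Fin.ext_iff]
  refine forall_congr' fun k => ?_
  by_cases hk : k ∈ Y <;> simp [hk]

theorem exists_rowIndex_eq {Y : Finset (Fin m)} (a : RowIndex Y) :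
    ∃ c, rowIndex Y c = a ∧ ∀ k ∈ Y, c k = 1 := by
  refine ⟨fun k => if hk : k ∈ Y then 1 else ⟨a k, by simpa [hk] using (a k).isLt⟩, ?_,
    fun k hk => dif_pos hk⟩
  funext k
  by_cases hk : k ∈ Y
  · exact RowIndex.apply_eq_of_mem hk _ _
  · simp [rowIndex, hk]

theorem card_rowIndex (Y : Finset (Fin m)) : Fintype.card (RowIndex Y) = 2 ^ (m - Y.card) := by
  rw [Fintype.card_pi]
  simp only [Fintype.card_fin]
  rw [Finset.prod_ite, Finset.prod_const_one, Finset.prod_const, one_mul, Finset.filter_not,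
    Finset.filter_mem_eq_inter, Finset.univ_inter, Finset.card_sdiff, Finset.card_univ,
    Fintype.card_fin, Finset.inter_univ]

def cubeRow (Y : Finset (Fin m)) (a : RowIndex Y) : (Fin m → Fin 2) → ZMod 2 :=
  fun c => if rowIndex Y c = a then 1 else 0

theorem MXstack_apply {u : ℕ} (X : Fin u → Finset (Fin m)) (i : Fin u) (a : RowIndex (X i)) :
    MXstack X ⟨i, a⟩ = cubeRow (X i) a := by
  ext c
  have hfactor : ∀ k, (if k ∈ X i then (1 : ZMod 2) else if (a k : ℕ) = c k then 1 else 0) =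
      if rowIndex (X i) c k = a k then 1 else 0 := by
    intro k
    by_cases hk : k ∈ X i
    · simp [hk, RowIndex.apply_eq_of_mem hk (rowIndex (X i) c) a]
    · simp [rowIndex, hk, Fin.ext_iff, eq_comm]
  rw [MXstack, of_apply, Finset.prod_congr rfl fun k _ => hfactor k, Finset.prod_boole]
  simp [cubeRow, funext_iff]

theorem rowIndex_toggle {Y : Finset (Fin m)} {k : Fin m} (hk : k ∈ Y) (c : Fin m → Fin 2) :
    rowIndex Y (toggle k c) = rowIndex Y c :=
  rowIndex_eq_rowIndex_iff.mpr fun k' hk' => by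
    simp [toggle, Function.update_of_ne (ne_of_mem_of_not_mem hk hk').symm]

theorem zeta_mulVec_cubeRow_eq_zero {Y : Finset (Fin m)} {k : Fin m} (hk : k ∈ Y)
    (a : RowIndex Y) {T : Fin m → Fin 2} (hT : T k = 1) : (zeta *ᵥ cubeRow Y a) T = 0 :=
  sum_eq_zero_of_toggle_invariant k fun c => by
    simp only [zeta, cubeRow, of_apply, toggle_le_iff hT, rowIndex_toggle hk]

theorem cubeRow_dotProduct_monomial_eq_zero {Y : Finset (Fin m)} {k : Fin m} (hk : k ∈ Y)
    (a : RowIndex Y) {S : Fin m → Fin 2} (hS : S k = 0) : cubeRow Y a ⬝ᵥ monomial S = 0 :=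
  sum_eq_zero_of_toggle_invariant k fun c => by
    simp only [monomial, cubeRow, le_toggle_iff hS, rowIndex_toggle hk]

theorem sum_cubeRow_image {Y : Finset (Fin m)} (s : Finset (Fin m → Fin 2))
    (hs : ∀ c c', rowIndex Y c = rowIndex Y c' → c ∈ s → c' ∈ s) :
    ∑ a ∈ s.image (rowIndex Y), cubeRow Y a = fun c => if c ∈ s then 1 else 0 := by
  ext c
  simp only [Finset.sum_apply, cubeRow, Finset.sum_ite_eq]
  exact if_congr (Finset.mem_image.trans ⟨fun ⟨c', hc', h⟩ => hs c' c h hc', fun hc => ⟨c, hc, rfl⟩⟩)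
    rfl rfl

theorem eq_of_rowIndex_eq_of_le {T c c' : Fin m → Fin 2}
    (h : rowIndex (ones T) c = rowIndex (ones T) c') (hc : T ≤ c) (hc' : T ≤ c') : c = c' := by
  funext k
  by_cases hk : k ∈ ones T
  · rw [le_iff_forall_mem_ones.mp hc k hk, le_iff_forall_mem_ones.mp hc' k hk]
  · exact rowIndex_eq_rowIndex_iff.mp h k hk

theorem cubeRow_dotProduct_monomial_self {T : Fin m → Fin 2} (a : RowIndex (ones T)) :
    cubeRow (ones T) a ⬝ᵥ monomial T = 1 := by
  obtain ⟨c₀, hc₀, hc₀T⟩ := exists_rowIndex_eq a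
  have hTc₀ : T ≤ c₀ := le_iff_forall_mem_ones.mpr hc₀T
  rw [dotProduct, Finset.sum_eq_single c₀ (fun c _ hc => ?_) (by simp)]
  · simp [cubeRow, monomial, hc₀, hTc₀]
  simp only [cubeRow, monomial, mul_ite, ite_mul, one_mul, mul_one, zero_mul]
  split_ifs with hTc hca
  · exact absurd (eq_of_rowIndex_eq_of_le (hca.trans hc₀.symm) hTc hTc₀) hc
  all_goals rfl

theorem wtc_monomial (T : Fin m → Fin 2) : wtc (monomial T) = 2 ^ (m - wtv T) := by
  rw [← card_ones, ← card_rowIndex, ← Finset.card_univ, wtc]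
  refine Finset.card_nbij (rowIndex (ones T)) (fun _ _ => Finset.mem_coe.mpr (Finset.mem_univ _))
    (fun c hc c' hc' h => ?_) (fun a _ => ?_)
  · exact eq_of_rowIndex_eq_of_le h (by simpa [monomial] using hc) (by simpa [monomial] using hc')
  · obtain ⟨c, hc, hcT⟩ := exists_rowIndex_eq a
    exact ⟨c, by simpa [monomial] using le_iff_forall_mem_ones.mpr hcT, hc⟩

/-- Reed–Muller bound: the sum of `w` over each subcube with free coordinates `ones T` is the
coefficient of `x^T` in `w`, so `w` has a nonzero on each of these `2^(m - |T|)` disjoint cubes. -/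
theorem pow_le_wtc_of_maximal {w : (Fin m → Fin 2) → ZMod 2} {T : Fin m → Fin 2}
    (hT : Maximal (fun S => (zeta *ᵥ w) S ≠ 0) T) : 2 ^ (m - wtv T) ≤ wtc w := by
  have hcube : ∀ a : RowIndex (ones T), cubeRow (ones T) a ⬝ᵥ w = (zeta *ᵥ w) T := by
    intro a
    rw [dotProduct_eq_sum_zeta_mulVec, Finset.sum_eq_single T (fun S _ hST => ?_) (by simp),
      cubeRow_dotProduct_monomial_self, mul_one]
    by_cases hTS : T ≤ S
    · rw [not_ne_iff.mp fun h => hST (hT.eq_of_ge h hTS), zero_mul]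
    · obtain ⟨k, hk, hSk⟩ : ∃ k ∈ ones T, S k = 0 := by
        simpa [le_iff_forall_mem_ones, fin_two_ne_one_iff] using hTS
      rw [cubeRow_dotProduct_monomial_eq_zero hk a hSk, mul_zero]
  rw [← card_ones, ← card_rowIndex, ← Finset.card_univ, wtc]
  refine Finset.card_le_card_of_surjOn (rowIndex (ones T)) fun a _ => ?_
  obtain ⟨c, -, hc⟩ := Finset.exists_ne_zero_of_sum_ne_zero ((hcube a).trans_ne hT.prop)
  obtain ⟨hca, hwc⟩ := mul_ne_zero_iff.mp hc
  exact ⟨c, by simpa using hwc, by simpa [cubeRow] using hca⟩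

theorem exists_eq_vecMul_iff_mem_span {ι n R : Type*} [Fintype ι] [Semiring R]
    (M : Matrix ι n R) (w : n → R) :
    (∃ c, w = c ᵥ* M) ↔ w ∈ Submodule.span R (Set.range M) := by
  change _ ↔ w ∈ Submodule.span R (Set.range M.row)
  rw [← range_vecMulLinear]
  exact exists_congr fun c => eq_comm

theorem dotProduct_eq_zero_of_mem_span {ι n R : Type*} [Fintype ι] [Fintype n] [CommSemiring R]
    {M : Matrix ι n R} {v w : n → R} (hw : M *ᵥ w = 0)
    (hv : v ∈ Submodule.span R (Set.range M)) : v ⬝ᵥ w = 0 := by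
  obtain ⟨c, rfl⟩ := (exists_eq_vecMul_iff_mem_span M v).mpr hv
  rw [← dotProduct_mulVec, hw, dotProduct_zero]

variable {u : ℕ}

/-- `↓Sˣ`: the down-set generated by the indicators of the complements `Xᵢᶜ`. -/
def decreasingSet (X : Fin u → Finset (Fin m)) : Set (Fin m → Fin 2) :=
  {T | ∃ i, T ≤ indFin (X i)ᶜ}

/-- `↑Z`: the up-set generated by the indicators of the `Zⱼ`. -/
def increasingSet (Z : Fin u → Finset (Fin m)) : Set (Fin m → Fin 2) :=
  {T | ∃ j, indFin (Z j) ≤ T}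

theorem indicator_mem_span_MXstack (X : Fin u → Finset (Fin m)) (i : Fin u)
    (s : Finset (Fin m → Fin 2)) (hs : ∀ c c', rowIndex (X i) c = rowIndex (X i) c' → c ∈ s → c' ∈ s) :
    (fun c => if c ∈ s then 1 else 0) ∈ Submodule.span (ZMod 2) (Set.range (MXstack X)) := by
  rw [← sum_cubeRow_image s hs]
  exact Submodule.sum_mem _ fun a _ => MXstack_apply X i a ▸ Submodule.subset_span ⟨⟨i, a⟩, rfl⟩

theorem monomial_mem_span_MXstack (X : Fin u → Finset (Fin m)) {T : Fin m → Fin 2}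
    (hT : T ∈ decreasingSet X) : monomial T ∈ Submodule.span (ZMod 2) (Set.range (MXstack X)) := by
  obtain ⟨i, hi⟩ := hT
  convert indicator_mem_span_MXstack X i (Finset.univ.filter (T ≤ ·)) fun c c' h hc =>
    Finset.mem_filter.mpr ⟨Finset.mem_univ _, fun k => ?_⟩ using 1
  · ext c; simp [monomial]
  replace hc := (Finset.mem_filter.mp hc).2
  by_cases hk : k ∈ X i
  · rw [le_indFin_compl_iff.mp hi k hk]; exact Fin.zero_le _
  · rw [← rowIndex_eq_rowIndex_iff.mp h k hk]; exact hc k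

theorem zeta_mem_span_MXstack (Z : Fin u → Finset (Fin m)) {T : Fin m → Fin 2}
    (hT : T ∈ increasingSet Z) : zeta T ∈ Submodule.span (ZMod 2) (Set.range (MXstack Z)) := by
  obtain ⟨j, hj⟩ := hT
  convert indicator_mem_span_MXstack Z j (Finset.univ.filter (· ≤ T)) fun c c' h hc =>
    Finset.mem_filter.mpr ⟨Finset.mem_univ _, fun k => ?_⟩ using 1
  · ext c; simp [zeta]
  replace hc := (Finset.mem_filter.mp hc).2
  by_cases hk : k ∈ Z j
  · rw [indFin_le_iff.mp hj k hk]; exact fin_two_le_one _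
  · rw [← rowIndex_eq_rowIndex_iff.mp h k hk]; exact hc k

theorem mem_span_MXstack_iff (X : Fin u → Finset (Fin m)) (w : (Fin m → Fin 2) → ZMod 2) :
    w ∈ Submodule.span (ZMod 2) (Set.range (MXstack X)) ↔
      ∀ T ∉ decreasingSet X, (zeta *ᵥ w) T = 0 := by
  constructor
  · intro hw
    induction hw using Submodule.span_induction with
    | mem x hx =>
      obtain ⟨⟨i, a⟩, rfl⟩ := hx
      intro T hT
      obtain ⟨k, hk, hTk⟩ : ∃ k ∈ X i, T k = 1 := by
        simpa [decreasingSet, le_indFin_compl_iff, fin_two_ne_zero_iff] using fun h => hT ⟨i, h⟩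
      rw [MXstack_apply]
      exact zeta_mulVec_cubeRow_eq_zero hk a hTk
    | zero => simp
    | add x y _ _ hx hy => intro T hT; simp [mulVec_add, hx T hT, hy T hT]
    | smul r x _ hx => intro T hT; simp [mulVec_smul, hx T hT]
  · intro hw
    rw [← sum_zeta_mulVec_smul_monomial w]
    refine Submodule.sum_mem _ fun T _ => ?_
    by_cases hT : T ∈ decreasingSet X
    · exact Submodule.smul_mem _ _ (monomial_mem_span_MXstack X hT)
    · rw [hw T hT, zero_smul]
      exact Submodule.zero_mem _

theorem MXstack_mulVec_eq_zero_iff (Z : Fin u → Finset (Fin m)) (w : (Fin m → Fin 2) → ZMod 2) :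
    MXstack Z *ᵥ w = 0 ↔ ∀ T ∈ increasingSet Z, (zeta *ᵥ w) T = 0 := by
  refine ⟨fun hw T hT => dotProduct_eq_zero_of_mem_span hw (zeta_mem_span_MXstack Z hT),
    fun hw => ?_⟩
  ext ⟨j, a⟩
  change MXstack Z ⟨j, a⟩ ⬝ᵥ w = 0
  rw [MXstack_apply, dotProduct_eq_sum_zeta_mulVec]
  refine Finset.sum_eq_zero fun S _ => ?_
  by_cases hS : S ∈ increasingSet Z
  · rw [hw S hS, zero_mul]
  · obtain ⟨k, hk, hSk⟩ : ∃ k ∈ Z j, S k = 0 := by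
      simpa [increasingSet, indFin_le_iff, fin_two_ne_one_iff] using fun h => hS ⟨j, h⟩
    rw [cubeRow_dotProduct_monomial_eq_zero hk a hSk, mul_zero]

/-- The distance `d_x` of the CSS code with check matrices `Hˣ = HX` and `Hᶻ = HZ`. -/
def cssDistance {ι κ : Type*} [Fintype ι] (HX : Matrix ι (Fin m → Fin 2) (ZMod 2))
    (HZ : Matrix κ (Fin m → Fin 2) (ZMod 2)) : ℕ∞ :=
  sInf {k : ℕ∞ | ∃ w, HZ *ᵥ w = 0 ∧ (¬ ∃ c, w = c ᵥ* HX) ∧ (wtc w : ℕ∞) = k}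

/-- `K = {0,1}^m ∖ (↓Sˣ ∪ ↑Z)`. -/
def middleLayer {v : ℕ} (X : Fin u → Finset (Fin m)) (Z : Fin v → Finset (Fin m)) :
    Set (Fin m → Fin 2) :=
  (decreasingSet X)ᶜ ∩ (increasingSet Z)ᶜ

theorem cssDistance_MXstack {v : ℕ} (X : Fin u → Finset (Fin m)) (Z : Fin v → Finset (Fin m))
    (hK : (middleLayer X Z).Nonempty) :
    cssDistance (MXstack X) (MXstack Z) = 2 ^ sInf ((fun T => m - wtv T) '' middleLayer X Z) := by
  obtain ⟨T₀, hT₀, hT₀min : m - wtv T₀ = _⟩ := Nat.sInf_mem (hK.image fun T => m - wtv T)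
  apply le_antisymm
  · refine sInf_le ⟨monomial T₀, ?_, ?_, ?_⟩
    · rw [MXstack_mulVec_eq_zero_iff, zeta_mulVec_monomial]
      exact fun T hT => Pi.single_eq_of_ne (by rintro rfl; exact hT₀.2 hT) _
    · rw [exists_eq_vecMul_iff_mem_span, mem_span_MXstack_iff, zeta_mulVec_monomial]
      exact fun h => by simpa using h T₀ hT₀.1
    · rw [wtc_monomial, hT₀min]
      push_cast
      rfl
  · refine le_sInf ?_
    rintro _ ⟨w, hker, hspan, rfl⟩
    rw [exists_eq_vecMul_iff_mem_span, mem_span_MXstack_iff] at hspan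
    push Not at hspan
    obtain ⟨T₀, hT₀, hne⟩ := hspan
    obtain ⟨T, hle, hT⟩ := (Set.toFinite {S | (zeta *ᵥ w) S ≠ 0}).exists_le_maximal hne
    have hTK : T ∈ middleLayer X Z :=
      ⟨fun ⟨i, hi⟩ => hT₀ ⟨i, hle.trans hi⟩,
        fun hTZ => hT.prop ((MXstack_mulVec_eq_zero_iff Z w).mp hker T hTZ)⟩
    exact_mod_cast (Nat.pow_le_pow_right two_pos (Nat.sInf_le (Set.mem_image_of_mem _ hTK))).trans
      (pow_le_wtc_of_maximal hT)

theorem wtv_add_one (T : Fin m → Fin 2) : wtv (T + 1) = m - wtv T := by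
  have : ones (T + 1) = (ones T)ᶜ := by
    ext k
    simp only [ones, Finset.mem_filter, Finset.mem_univ, true_and, Finset.mem_compl, Pi.add_apply,
      Pi.one_apply]
    generalize T k = a
    decide +revert
  rw [← card_ones, ← card_ones, this, Finset.card_compl, Fintype.card_fin]

theorem add_one_add_one (T : Fin m → Fin 2) : T + 1 + 1 = T := by
  rw [add_assoc, show (1 + 1 : Fin m → Fin 2) = 0 from funext fun _ => rfl, add_zero]

theorem wtv_le (T : Fin m → Fin 2) : wtv T ≤ m :=
  (Finset.card_le_univ _).trans_eq (Fintype.card_fin m)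

theorem add_one_le_indFin_compl_iff {Y : Finset (Fin m)} {T : Fin m → Fin 2} :
    T + 1 ≤ indFin Yᶜ ↔ indFin Y ≤ T := by
  rw [le_indFin_compl_iff, indFin_le_iff]
  refine forall₂_congr fun k _ => ?_
  simp only [Pi.add_apply, Pi.one_apply]
  generalize T k = a
  decide +revert

theorem indFin_le_add_one_iff {Y : Finset (Fin m)} {T : Fin m → Fin 2} :
    indFin Y ≤ T + 1 ↔ T ≤ indFin Yᶜ := by
  rw [le_indFin_compl_iff, indFin_le_iff]
  refine forall₂_congr fun k _ => ?_
  simp only [Pi.add_apply, Pi.one_apply]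
  generalize T k = a
  decide +revert

theorem add_one_mem_middleLayer_iff {v : ℕ} {X : Fin u → Finset (Fin m)}
    {Z : Fin v → Finset (Fin m)} {T : Fin m → Fin 2} :
    T + 1 ∈ middleLayer X Z ↔ T ∈ middleLayer Z X := by
  simp [middleLayer, decreasingSet, increasingSet, add_one_le_indFin_compl_iff,
    indFin_le_add_one_iff, and_comm]

theorem image_sub_wtv_middleLayer_swap {v : ℕ} (X : Fin u → Finset (Fin m))
    (Z : Fin v → Finset (Fin m)) :
    (fun T => m - wtv T) '' middleLayer Z X = wtv '' middleLayer X Z := by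
  ext n
  constructor
  · rintro ⟨T, hT, rfl⟩
    exact ⟨T + 1, add_one_mem_middleLayer_iff.mpr hT, wtv_add_one T⟩
  · rintro ⟨T, hT, rfl⟩
    refine ⟨T + 1, add_one_mem_middleLayer_iff.mp ?_, ?_⟩
    · rwa [add_one_add_one]
    · change m - wtv (T + 1) = wtv T
      rw [wtv_add_one, Nat.sub_sub_self (wtv_le T)]

end SubsetCode

open SubsetCode in
theorem css_intersecting_distances_general {m u v : ℕ}
    (X : Fin (u + 1) → Finset (Fin m)) (Z : Fin (v + 1) → Finset (Fin m))
    (K : Set (Fin m → Fin 2))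
    (hK : K = {w | ¬ (∃ i, w ≤ indFin (X i)ᶜ) ∧ ¬ (∃ j, indFin (Z j) ≤ w)})
    (hKne : K.Nonempty) :
    sInf {k : ℕ∞ | ∃ w : (Fin m → Fin 2) → ZMod 2,
        MXstack Z *ᵥ w = 0 ∧ (¬ ∃ c, w = Matrix.vecMul c (MXstack X)) ∧ (wtc w : ℕ∞) = k} =
      (2 : ℕ∞) ^ sInf {k : ℕ | ∃ x ∈ K, m - wtv x = k} ∧
    sInf {k : ℕ∞ | ∃ w : (Fin m → Fin 2) → ZMod 2,
        MXstack X *ᵥ w = 0 ∧ (¬ ∃ c, w = Matrix.vecMul c (MXstack Z)) ∧ (wtc w : ℕ∞) = k} =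
      (2 : ℕ∞) ^ sInf {k : ℕ | ∃ x ∈ K, wtv x = k} := by
  change K = middleLayer X Z at hK
  subst hK
  refine ⟨cssDistance_MXstack X Z hKne, ?_⟩
  change cssDistance (MXstack Z) (MXstack X) = 2 ^ sInf (wtv '' middleLayer X Z)
  rw [← image_sub_wtv_middleLayer_swap]
  refine cssDistance_MXstack Z X ((Set.image_nonempty (f := fun T => m - wtv T)).mp ?_)
  rw [image_sub_wtv_middleLayer_swap]
  exact hKne.image wtv

/-- Distance formula for intersecting subset codes `CSS(X,Z)` built from components
`[1 1]`: with `↓Sˣ` the decreasing set generated by the (indicators of) complements of the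
`Xᵢ`, `↑Z` the increasing set generated by the `Z_j`, and `K` the middle layer, the CSS
distances are `d_x = 2^{min{m−|v| : v ∈ K}}` and `d_z = 2^{min{|v| : v ∈ K}}`. -/
theorem css_intersecting_distances {m u v : ℕ}
    (X : Fin (u + 1) → Finset (Fin m)) (Z : Fin (v + 1) → Finset (Fin m))
    (hXZ : ∀ i j, (X i ∩ Z j).Nonempty)
    (K : Set (Fin m → Fin 2))
    (hK : K = {w | ¬ (∃ i, w ≤ indFin (X i)ᶜ) ∧ ¬ (∃ j, indFin (Z j) ≤ w)})
    (hKne : K.Nonempty) :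
    sInf {k : ℕ∞ | ∃ w : (Fin m → Fin 2) → ZMod 2,
        MXstack Z *ᵥ w = 0 ∧ (¬ ∃ c, w = Matrix.vecMul c (MXstack X)) ∧ (wtc w : ℕ∞) = k} =
      (2 : ℕ∞) ^ sInf {k : ℕ | ∃ x ∈ K, m - wtv x = k} ∧
    sInf {k : ℕ∞ | ∃ w : (Fin m → Fin 2) → ZMod 2,
        MXstack X *ᵥ w = 0 ∧ (¬ ∃ c, w = Matrix.vecMul c (MXstack Z)) ∧ (wtc w : ℕ∞) = k} =
      (2 : ℕ∞) ^ sInf {k : ℕ | ∃ x ∈ K, wtv x = k} :=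
  css_intersecting_distances_general X Z K hK hKne
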